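/- arXiv:2208.03864 — 3 statements merged into one kernel-verified Lean document; each statement's English description precedes it below -/
import Mathlib

section
/- Let n be a positive integer and f : 𝔽₂ⁿ → 𝔽₂ a Boolean function. Then: (i) W_f(ν) ≤ 0 for every ν ∈ 𝔽₂ⁿ if and only if there exists ν₀ ∈ 𝔽₂ⁿ such that f(x) = ν₀·x + 1 for all x ∈ 𝔽₂ⁿ (i.e. f is affine with f(0) = 1); and (ii) W_f(ν) ≥ 0 for every ν ∈ 𝔽₂ⁿ if and only if there exists ν₀ ∈ 𝔽₂ⁿ such that f(x) = ν₀·x for all x ∈ 𝔽₂ⁿ (i.e. f is affine with f(0) = 0). -/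
def dotp {n : ℕ} (v x : Fin n → ZMod 2) : ZMod 2 := ∑ i, v i * x i

def wht {n : ℕ} (f : (Fin n → ZMod 2) → ZMod 2) (ν : Fin n → ZMod 2) : ℤ :=
  ∑ x : Fin n → ZMod 2, (-1 : ℤ) ^ (f x + dotp ν x).val

def whtF {n m : ℕ} (F : (Fin n → ZMod 2) → (Fin m → ZMod 2))
    (μ : Fin m → ZMod 2) (ν : Fin n → ZMod 2) : ℤ :=
  wht (fun x => dotp μ (F x)) ν

def cw {n m : ℕ} (F : (Fin n → ZMod 2) → (Fin m → ZMod 2))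
    (μ : Fin m → ZMod 2) (ν : Fin n → ZMod 2) :
    {x : Fin n → ZMod 2 // x ≠ 0} → ZMod 2 :=
  fun x => dotp μ (F x.1) + dotp ν x.1

def codeF {n m : ℕ} (F : (Fin n → ZMod 2) → (Fin m → ZMod 2)) :
    Set ({x : Fin n → ZMod 2 // x ≠ 0} → ZMod 2) :=
  Set.range fun p : (Fin m → ZMod 2) × (Fin n → ZMod 2) => cw F p.1 p.2

def wt {n : ℕ} (c : {x : Fin n → ZMod 2 // x ≠ 0} → ZMod 2) : ℕ :=
  (Finset.univ.filter fun x => c x = 1).card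

def IsMinimal {n : ℕ} (C : Set ({x : Fin n → ZMod 2 // x ≠ 0} → ZMod 2)) : Prop :=
  ∀ c ∈ C, ∀ c' ∈ C, c ≠ 0 → c' ≠ 0 →
    {x | c' x = 1} ⊆ {x | c x = 1} → c' = c

def weights {n m : ℕ} (F : (Fin n → ZMod 2) → (Fin m → ZMod 2)) : Set ℕ :=
  {w | ∃ c ∈ codeF F, c ≠ 0 ∧ wt c = w}

def chi (a : ZMod 2) : ℤ := (-1) ^ a.val

lemma chi_add (a b : ZMod 2) : chi (a + b) = chi a * chi b := by
  revert a b; decide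

lemma chi_cases (a : ZMod 2) : chi a = 1 ∨ chi a = -1 := by revert a; decide

lemma chi_eq_one_iff (a : ZMod 2) : chi a = 1 ↔ a = 0 := by revert a; decide

lemma chi_one : chi 1 = -1 := by decide

lemma chi_zero : chi 0 = 1 := by decide

lemma chi_sum {ι : Type*} (s : Finset ι) (g : ι → ZMod 2) :
    chi (∑ i ∈ s, g i) = ∏ i ∈ s, chi (g i) := by
  induction s using Finset.cons_induction with
  | empty => simp [chi]
  | cons a s ha ih => simp [Finset.sum_cons, Finset.prod_cons, chi_add, ih]

lemma dotp_comm {n : ℕ} (v x : Fin n → ZMod 2) : dotp v x = dotp x v := by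
  unfold dotp; exact Finset.sum_congr rfl fun i _ => mul_comm _ _

lemma dotp_add_right {n : ℕ} (ν x y : Fin n → ZMod 2) :
    dotp ν (x + y) = dotp ν x + dotp ν y := by
  unfold dotp
  rw [← Finset.sum_add_distrib]
  exact Finset.sum_congr rfl fun i _ => by simp [mul_add]

lemma vec_add_eq_zero {n : ℕ} (x y : Fin n → ZMod 2) : x + y = 0 ↔ x = y := by
  constructor
  · intro h
    funext i
    have := congrFun h i
    have hx : x i = -(y i) := eq_neg_of_add_eq_zero_left this
    rw [hx, CharTwo.neg_eq]
  · rintro rfl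
    funext i
    exact CharTwo.add_self_eq_zero (x i)

lemma sum_chi_dotp {n : ℕ} (x : Fin n → ZMod 2) :
    ∑ ν : Fin n → ZMod 2, chi (dotp ν x) = if x = 0 then 2 ^ n else 0 := by
  have h : ∀ ν : Fin n → ZMod 2, chi (dotp ν x) = ∏ i, chi (ν i * x i) := fun ν =>
    chi_sum Finset.univ fun i => ν i * x i
  rw [Finset.sum_congr rfl fun ν _ => h ν, ← Fintype.prod_sum
    (fun i (b : ZMod 2) => chi (b * x i))]
  have key : ∀ i, (∑ b : ZMod 2, chi (b * x i)) = if x i = 0 then 2 else 0 := by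
    intro i
    rw [show (Finset.univ : Finset (ZMod 2)) = {0, 1} from rfl,
      Finset.sum_insert (by decide), Finset.sum_singleton, zero_mul, one_mul, chi_zero]
    rcases (by decide : ∀ a : ZMod 2, a = 0 ∨ a = 1) (x i) with h | h <;>
      simp [h, chi_zero, chi_one]
  rw [Finset.prod_congr rfl fun i _ => key i]
  by_cases hx : x = 0
  · subst hx
    simp [Finset.prod_const, Finset.card_univ]
  · obtain ⟨i, hi⟩ : ∃ i, x i ≠ 0 := by
      by_contra h; push_neg at h; exact hx (funext h)
    rw [if_neg hx]
    exact Finset.prod_eq_zero (Finset.mem_univ i) (by simp [hi])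

lemma wht_eq {n : ℕ} (f : (Fin n → ZMod 2) → ZMod 2) (ν : Fin n → ZMod 2) :
    wht f ν = ∑ x : Fin n → ZMod 2, chi (f x) * chi (dotp ν x) := by
  unfold wht
  exact Finset.sum_congr rfl fun x _ => by rw [← chi_add]; rfl

/-- Fourier inversion. -/
lemma inversion {n : ℕ} (f : (Fin n → ZMod 2) → ZMod 2) (x : Fin n → ZMod 2) :
    ∑ ν : Fin n → ZMod 2, chi (dotp ν x) * wht f ν = 2 ^ n * chi (f x) := by
  have step1 : ∀ ν : Fin n → ZMod 2, chi (dotp ν x) * wht f ν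
      = ∑ y : Fin n → ZMod 2, chi (f y) * chi (dotp ν (x + y)) := by
    intro ν
    rw [wht_eq, Finset.mul_sum]
    refine Finset.sum_congr rfl fun y _ => ?_
    rw [dotp_add_right, chi_add]; ring
  rw [Finset.sum_congr rfl fun ν _ => step1 ν, Finset.sum_comm]
  have step2 : ∀ y : Fin n → ZMod 2,
      (∑ ν : Fin n → ZMod 2, chi (f y) * chi (dotp ν (x + y)))
        = chi (f y) * (if x + y = 0 then 2 ^ n else 0) := by
    intro y; rw [← Finset.mul_sum, sum_chi_dotp]
  rw [Finset.sum_congr rfl fun y _ => step2 y]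
  rw [Finset.sum_eq_single x (fun y _ hy => by
      rw [if_neg (fun h => hy ((vec_add_eq_zero x y).mp h).symm), mul_zero])
    (fun h => absurd (Finset.mem_univ x) h)]
  rw [if_pos ((vec_add_eq_zero x x).mpr rfl), mul_comm]

/-- The main hard direction. -/
lemma main_neg {n : ℕ} (f : (Fin n → ZMod 2) → ZMod 2)
    (h : ∀ ν : Fin n → ZMod 2, wht f ν ≤ 0) :
    ∃ ν₀ : Fin n → ZMod 2, ∀ x, f x = dotp ν₀ x + 1 := by
  classical
  set a : (Fin n → ZMod 2) → ℤ := fun ν => -wht f ν with ha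
  have ha0 : ∀ ν, 0 ≤ a ν := fun ν => neg_nonneg.mpr (h ν)
  have hpow : (0:ℤ) < 2 ^ n := by positivity
  have hsum : ∑ ν : Fin n → ZMod 2, a ν = 2 ^ n := by
    have h0 := inversion f 0
    have hd0 : ∀ ν : Fin n → ZMod 2, dotp ν 0 = 0 := by intro ν; simp [dotp]
    simp only [hd0, chi_zero, one_mul] at h0
    have hf0 : chi (f 0) = -1 := by
      rcases chi_cases (f 0) with hc | hc
      · exfalso
        rw [hc, mul_one] at h0
        have hle : ∑ ν : Fin n → ZMod 2, wht f ν ≤ 0 :=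
          Finset.sum_nonpos fun ν _ => h ν
        linarith
      · exact hc
    rw [hf0] at h0
    rw [ha, Finset.sum_neg_distrib, h0]
    ring
  have key : ∀ ν ν' : Fin n → ZMod 2, a ν ≠ 0 → a ν' ≠ 0 → ν = ν' := by
    intro ν ν' hν hν'
    have hxall : ∀ x, chi (dotp ν x) = chi (dotp ν' x) := by
      intro x
      have hx := inversion f x
      have habs : ∑ μ : Fin n → ZMod 2, chi (dotp μ x) * a μ = -(2 ^ n) * chi (f x) := by
        rw [ha]
        simp only [mul_neg, Finset.sum_neg_distrib, hx]
        ring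
      rcases chi_cases (f x) with hc | hc
      · have hz : ∑ μ : Fin n → ZMod 2, (chi (dotp μ x) + 1) * a μ = 0 := by
          have e : ∑ μ : Fin n → ZMod 2, (chi (dotp μ x) + 1) * a μ
              = (∑ μ : Fin n → ZMod 2, chi (dotp μ x) * a μ) + ∑ μ, a μ := by
            rw [← Finset.sum_add_distrib]
            exact Finset.sum_congr rfl fun μ _ => by ring
          rw [e, habs, hsum, hc]; ring
        have hterm : ∀ μ ∈ Finset.univ, (0:ℤ) ≤ (chi (dotp μ x) + 1) * a μ := by
          intro μ _
          rcases chi_cases (dotp μ x) with hd | hd <;> rw [hd] <;> nlinarith [ha0 μ]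
        have hz' := (Finset.sum_eq_zero_iff_of_nonneg hterm).mp hz
        have c1 : chi (dotp ν x) = -1 := by
          rcases mul_eq_zero.mp (hz' ν (Finset.mem_univ ν)) with h1 | h1
          · linarith
          · exact absurd h1 hν
        have c2 : chi (dotp ν' x) = -1 := by
          rcases mul_eq_zero.mp (hz' ν' (Finset.mem_univ ν')) with h2 | h2
          · linarith
          · exact absurd h2 hν'
        rw [c1, c2]
      · have hz : ∑ μ : Fin n → ZMod 2, (1 - chi (dotp μ x)) * a μ = 0 := by
          have e : ∑ μ : Fin n → ZMod 2, (1 - chi (dotp μ x)) * a μ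
              = (∑ μ, a μ) - ∑ μ : Fin n → ZMod 2, chi (dotp μ x) * a μ := by
            rw [← Finset.sum_sub_distrib]
            exact Finset.sum_congr rfl fun μ _ => by ring
          rw [e, habs, hsum, hc]; ring
        have hterm : ∀ μ ∈ Finset.univ, (0:ℤ) ≤ (1 - chi (dotp μ x)) * a μ := by
          intro μ _
          rcases chi_cases (dotp μ x) with hd | hd <;> rw [hd] <;> nlinarith [ha0 μ]
        have hz' := (Finset.sum_eq_zero_iff_of_nonneg hterm).mp hz
        have c1 : chi (dotp ν x) = 1 := by
          rcases mul_eq_zero.mp (hz' ν (Finset.mem_univ ν)) with h1 | h1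
          · linarith
          · exact absurd h1 hν
        have c2 : chi (dotp ν' x) = 1 := by
          rcases mul_eq_zero.mp (hz' ν' (Finset.mem_univ ν')) with h2 | h2
          · linarith
          · exact absurd h2 hν'
        rw [c1, c2]
    funext j
    have hj := hxall (fun i => if i = j then 1 else 0)
    have hd : ∀ μ : Fin n → ZMod 2, dotp μ (fun i => if i = j then 1 else 0) = μ j := by
      intro μ
      unfold dotp
      rw [Finset.sum_eq_single j] <;> simp (config := {contextual := true})
    rw [hd, hd] at hj
    rcases (by decide : ∀ b : ZMod 2, b = 0 ∨ b = 1) (ν j) with h1 | h1 <;>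
      rcases (by decide : ∀ b : ZMod 2, b = 0 ∨ b = 1) (ν' j) with h2 | h2 <;>
      rw [h1, h2] <;> rw [h1, h2] at hj <;> first
        | rfl
        | (rw [chi_zero, chi_one] at hj; omega)
        | (rw [chi_one, chi_zero] at hj; omega)
  obtain ⟨ν₀, hν₀⟩ : ∃ ν₀ : Fin n → ZMod 2, a ν₀ ≠ 0 := by
    by_contra hc
    push_neg at hc
    have : ∑ ν : Fin n → ZMod 2, a ν = 0 := Finset.sum_eq_zero fun ν _ => hc ν
    rw [hsum] at this
    linarith
  have hval : a ν₀ = 2 ^ n := by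
    rw [← hsum, Finset.sum_eq_single ν₀
      (fun ν _ hν => by by_contra hne; exact hν (key ν ν₀ hne hν₀))
      (fun h => absurd (Finset.mem_univ ν₀) h)]
  refine ⟨ν₀, fun x => ?_⟩
  have hw : wht f ν₀ = -(2 ^ n) := by
    have : -wht f ν₀ = 2 ^ n := hval
    linarith
  have hterm : ∀ x : Fin n → ZMod 2, (-1:ℤ) ≤ (-1 : ℤ) ^ (f x + dotp ν₀ x).val := by
    intro x
    rcases Nat.even_or_odd (f x + dotp ν₀ x).val with he | ho
    · rw [Even.neg_one_pow he]; norm_num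
    · rw [Odd.neg_one_pow ho]
  have hcard : (Finset.univ : Finset (Fin n → ZMod 2)).card = 2 ^ n := by
    simp [Fintype.card_fun]
  have hall : ∀ y : Fin n → ZMod 2, (-1 : ℤ) ^ (f y + dotp ν₀ y).val = -1 := by
    intro y
    by_contra hne
    have hy1 : (-1 : ℤ) ^ (f y + dotp ν₀ y).val = 1 := by
      rcases Nat.even_or_odd (f y + dotp ν₀ y).val with he | ho
      · exact Even.neg_one_pow he
      · exact absurd (Odd.neg_one_pow ho) hne
    have hlb : -(2^n) + 2 ≤ wht f ν₀ := by
      unfold wht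
      rw [← Finset.sum_erase_add _ _ (Finset.mem_univ y), hy1]
      have hsle : -(2^n) + 1 ≤ ∑ x ∈ Finset.univ.erase y, (-1:ℤ) ^ (f x + dotp ν₀ x).val := by
        have hstep : ((Finset.univ.erase y).card : ℤ) • (-1 : ℤ)
            ≤ ∑ x ∈ Finset.univ.erase y, (-1:ℤ) ^ (f x + dotp ν₀ x).val := by
          have := Finset.card_nsmul_le_sum (Finset.univ.erase y)
            (fun x => (-1:ℤ) ^ (f x + dotp ν₀ x).val) (-1) (fun x _ => hterm x)
          simpa using this
        have hceq : ((Finset.univ.erase y).card : ℤ) • (-1 : ℤ) = -(2^n) + 1 := by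
          rw [Finset.card_erase_of_mem (Finset.mem_univ y), hcard, smul_eq_mul]
          have h1 : (1:ℕ) ≤ 2^n := Nat.one_le_two_pow
          push_cast [h1]
          ring
        linarith
      linarith
    linarith
  have hvx := hall x
  have hv : (f x + dotp ν₀ x).val = 1 := by
    rcases (by decide : ∀ b : ZMod 2, b.val = 0 ∨ b.val = 1) (f x + dotp ν₀ x) with h | h
    · rw [h] at hvx; norm_num at hvx
    · exact h
  have heq1 : f x + dotp ν₀ x = 1 :=
    (ZMod.val_eq_one (by norm_num) (f x + dotp ν₀ x)).mp hv
  calc f x = f x + (dotp ν₀ x + dotp ν₀ x) := by rw [CharTwo.add_self_eq_zero]; ring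
    _ = (f x + dotp ν₀ x) + dotp ν₀ x := by ring
    _ = 1 + dotp ν₀ x := by rw [heq1]
    _ = dotp ν₀ x + 1 := by ring

lemma wht_affine {n : ℕ} (ν₀ ν : Fin n → ZMod 2) (c : ZMod 2) :
    wht (fun x => dotp ν₀ x + c) ν = chi c * (if ν = ν₀ then 2 ^ n else 0) := by
  have hterm : ∀ x : Fin n → ZMod 2, (-1:ℤ) ^ ((dotp ν₀ x + c) + dotp ν x).val
      = chi c * chi (dotp (ν₀ + ν) x) := by
    intro x
    have hd : dotp (ν₀ + ν) x = dotp ν₀ x + dotp ν x := by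
      rw [dotp_comm, dotp_add_right, dotp_comm x ν₀, dotp_comm x ν]
    have he : ((dotp ν₀ x + c) + dotp ν x) = c + dotp (ν₀ + ν) x := by rw [hd]; ring
    rw [show (-1:ℤ) ^ ((dotp ν₀ x + c) + dotp ν x).val = chi ((dotp ν₀ x + c) + dotp ν x)
      from rfl, he, chi_add]
  unfold wht
  rw [Finset.sum_congr rfl fun x _ => hterm x, ← Finset.mul_sum,
    show ∑ x : Fin n → ZMod 2, chi (dotp (ν₀+ν) x) = ∑ x : Fin n → ZMod 2, chi (dotp x (ν₀+ν))
      from Finset.sum_congr rfl fun x _ => by rw [dotp_comm]]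
  rw [sum_chi_dotp]
  congr 1
  by_cases h : ν = ν₀
  · rw [if_pos ((vec_add_eq_zero ν₀ ν).mpr h.symm), if_pos h]
  · rw [if_neg (fun hc => h ((vec_add_eq_zero ν₀ ν).mp hc).symm), if_neg h]

theorem stmt0 (n : ℕ) (hn : 0 < n) (f : (Fin n → ZMod 2) → ZMod 2) :
    ((∀ ν : Fin n → ZMod 2, wht f ν ≤ 0) ↔
      ∃ ν₀ : Fin n → ZMod 2, ∀ x, f x = dotp ν₀ x + 1) ∧
    ((∀ ν : Fin n → ZMod 2, 0 ≤ wht f ν) ↔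
      ∃ ν₀ : Fin n → ZMod 2, ∀ x, f x = dotp ν₀ x) := by
  have hpow : (0:ℤ) ≤ 2 ^ n := by positivity
  constructor
  · constructor
    · exact main_neg f
    · rintro ⟨ν₀, hν₀⟩ ν
      have he : wht f ν = wht (fun x => dotp ν₀ x + 1) ν := by
        unfold wht; exact Finset.sum_congr rfl fun x _ => by rw [hν₀ x]
      rw [he, wht_affine, chi_one]
      by_cases h : ν = ν₀ <;> simp [h] <;> linarith
  · constructor
    · intro h
      have hneg : ∀ ν : Fin n → ZMod 2, wht (fun x => f x + 1) ν ≤ 0 := by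
        intro ν
        have he : wht (fun x => f x + 1) ν = -wht f ν := by
          unfold wht
          rw [← Finset.sum_neg_distrib]
          refine Finset.sum_congr rfl fun x _ => ?_
          have hr : (f x + 1 + dotp ν x) = (f x + dotp ν x) + 1 := by ring
          rw [hr, show (-1:ℤ) ^ ((f x + dotp ν x) + 1).val = chi ((f x + dotp ν x) + 1)
            from rfl, chi_add, chi_one, mul_neg_one]
          rfl
        rw [he]
        linarith [h ν]
      obtain ⟨ν₀, hν₀⟩ := main_neg (fun x => f x + 1) hneg
      refine ⟨ν₀, fun x => ?_⟩
      have h2 : f x + 1 + 1 = dotp ν₀ x + 1 + 1 := by rw [hν₀ x]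
      calc f x = f x + (1 + 1) := by rw [CharTwo.add_self_eq_zero]; ring
        _ = (f x + 1) + 1 := by ring
        _ = (dotp ν₀ x + 1) + 1 := by rw [hν₀ x]
        _ = dotp ν₀ x + (1 + 1) := by ring
        _ = dotp ν₀ x := by rw [CharTwo.add_self_eq_zero]; ring
    · rintro ⟨ν₀, hν₀⟩ ν
      have he : wht f ν = wht (fun x => dotp ν₀ x + 0) ν := by
        unfold wht
        refine Finset.sum_congr rfl fun x _ => ?_
        show (-1:ℤ) ^ (f x + dotp ν x).val = (-1) ^ ((dotp ν₀ x + 0) + dotp ν x).val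
        rw [hν₀ x, add_zero]
      rw [he, wht_affine, chi_zero]
      by_cases h : ν = ν₀ <;> simp [h] <;> linarith
end

section
/- Let F be an (n,m)-function such that F(0) = 0 and, for every μ ∈ 𝔽₂^m∖{0}, the component μ·F is not affine (there are no ν ∈ 𝔽₂ⁿ and ε ∈ 𝔽₂ with μ·F(x) = ν·x + ε for all x). Then the binary linear code C_F is minimal if and only if both of the following hold: (1) for every μ ∈ 𝔽₂^m∖{0} and all ν, ν' ∈ 𝔽₂ⁿ with ν ≠ ν', one has W_F(μ,ν) + W_F(μ,ν') ≠ 2ⁿ and W_F(μ,ν) − W_F(μ,ν') ≠ 2ⁿ; (2) for all μ, μ' ∈ 𝔽₂^m∖{0} with μ ≠ μ' and all ν, ν' ∈ 𝔽₂ⁿ, one has W_F(μ,ν) + W_F(μ',ν') − W_F(μ+μ', ν+ν') ≠ 2ⁿ. -/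
lemma z2 (a : ZMod 2) : a = 0 ∨ a = 1 := by revert a; decide
lemma z2_add_self (a : ZMod 2) : a + a = 0 := by revert a; decide
lemma z2_add_eq_zero {a b : ZMod 2} (h : a + b = 0) : a = b := by revert h a b; decide

lemma fadd_self {k : ℕ} (a : Fin k → ZMod 2) : a + a = 0 := funext fun i => z2_add_self (a i)
lemma fadd_eq_zero {k : ℕ} {a b : Fin k → ZMod 2} (h : a + b = 0) : a = b :=
  funext fun i => z2_add_eq_zero (congrFun h i)
lemma fadd_cancel2 {k : ℕ} (a b : Fin k → ZMod 2) : (a + b) + b = a := by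
  rw [add_assoc, fadd_self, add_zero]
lemma fadd_cancel' {k : ℕ} (a b : Fin k → ZMod 2) : a + (b + a) = b := by
  rw [add_comm b a, ← add_assoc, fadd_self, zero_add]

lemma dotp_add_left {k : ℕ} (a b x : Fin k → ZMod 2) : dotp (a + b) x = dotp a x + dotp b x := by
  simp [dotp, add_mul, Finset.sum_add_distrib]
lemma dotp_add_right_s3 {k : ℕ} (v a b : Fin k → ZMod 2) : dotp v (a + b) = dotp v a + dotp v b := by
  simp [dotp, mul_add, Finset.sum_add_distrib]
lemma dotp_zero_left {k : ℕ} (x : Fin k → ZMod 2) : dotp 0 x = 0 := by simp [dotp]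
lemma dotp_zero_right {k : ℕ} (v : Fin k → ZMod 2) : dotp v 0 = 0 := by simp [dotp]
lemma dotp_single {k : ℕ} (v : Fin k → ZMod 2) (i : Fin k) : dotp v (Pi.single i 1) = v i := by
  simp [dotp, Pi.single_apply, mul_ite]

lemma sign_add (a b : ZMod 2) : ((-1:ℤ))^(a+b).val = (-1)^a.val * (-1)^b.val := by revert a b; decide
lemma sign_one_add (a : ZMod 2) : ((-1:ℤ))^(a+1).val = -((-1:ℤ)^a.val) := by revert a; decide
lemma indicator4 (a b : ZMod 2) :
    (1 + (-1:ℤ)^a.val) * (1 - (-1)^b.val) = if a = 0 ∧ b = 1 then 4 else 0 := by revert a b; decide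

lemma sum_sign_linear {k : ℕ} (N : Fin k → ZMod 2) (hN : N ≠ 0) :
    ∑ x : Fin k → ZMod 2, (-1:ℤ)^(dotp N x).val = 0 := by
  obtain ⟨i, hi⟩ := Function.ne_iff.mp hN
  have hi1 : N i = 1 := (z2 (N i)).resolve_left hi
  set e := Equiv.addRight (Pi.single i 1 : Fin k → ZMod 2) with he
  have h1 : ∀ x, ((-1:ℤ))^(dotp N (e x)).val = -((-1:ℤ))^(dotp N x).val := by
    intro x
    have hx : dotp N (e x) = dotp N x + 1 := by
      show dotp N (x + Pi.single i 1) = _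
      rw [dotp_add_right_s3, dotp_single, hi1]
    rw [hx, sign_one_add]
  have h2 : ∑ x : Fin k → ZMod 2, (-1:ℤ)^(dotp N x).val
      = ∑ x : Fin k → ZMod 2, (-1:ℤ)^(dotp N (e x)).val := (Equiv.sum_comp e _).symm
  rw [Finset.sum_congr rfl (fun x _ => h1 x), Finset.sum_neg_distrib] at h2
  linarith

lemma key_count {k : ℕ} (g h : (Fin k → ZMod 2) → ZMod 2) :
    (∀ x, h x = 1 → g x = 1) ↔
      (∑ x : Fin k → ZMod 2, (-1:ℤ)^(h x).val)
        + (∑ x : Fin k → ZMod 2, (-1:ℤ)^(g x + h x).val)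
        - (∑ x : Fin k → ZMod 2, (-1:ℤ)^(g x).val) = 2^k := by
  have hT : ∑ x : Fin k → ZMod 2, (if g x = 0 ∧ h x = 1 then (4:ℤ) else 0)
      = 2^k + (∑ x : Fin k → ZMod 2, (-1:ℤ)^(g x).val)
        - (∑ x : Fin k → ZMod 2, (-1:ℤ)^(h x).val)
        - (∑ x : Fin k → ZMod 2, (-1:ℤ)^(g x + h x).val) := by
    have e1 : ∀ x : Fin k → ZMod 2, (if g x = 0 ∧ h x = 1 then (4:ℤ) else 0)
        = 1 + (-1:ℤ)^(g x).val - (-1)^(h x).val - (-1)^(g x + h x).val := by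
      intro x
      rw [← indicator4, sign_add]; ring
    rw [Finset.sum_congr rfl (fun x _ => e1 x)]
    rw [Finset.sum_sub_distrib, Finset.sum_sub_distrib, Finset.sum_add_distrib]
    have : ∑ _x : Fin k → ZMod 2, (1:ℤ) = 2^k := by
      simp [Finset.card_univ]
    rw [this]
  constructor
  · intro hs
    have hz : ∑ x : Fin k → ZMod 2, (if g x = 0 ∧ h x = 1 then (4:ℤ) else 0) = 0 := by
      apply Finset.sum_eq_zero; intro x _
      rw [if_neg]; rintro ⟨hg, hh⟩
      rw [hs x hh] at hg; exact one_ne_zero hg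
    rw [hz] at hT; linarith
  · intro heq
    have hz : ∑ x : Fin k → ZMod 2, (if g x = 0 ∧ h x = 1 then (4:ℤ) else 0) = 0 := by linarith
    intro x hx
    by_contra hgx
    have hg0 : g x = 0 := (z2 (g x)).resolve_right hgx
    have := (Finset.sum_eq_zero_iff_of_nonneg (fun y _ => by positivity)).mp hz x (Finset.mem_univ x)
    rw [if_pos ⟨hg0, hx⟩] at this
    norm_num at this

section CW
variable {n m : ℕ} {F : (Fin n → ZMod 2) → (Fin m → ZMod 2)}

lemma whtF_eq (M : Fin m → ZMod 2) (N : Fin n → ZMod 2) :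
    whtF F M N = ∑ x : Fin n → ZMod 2, (-1:ℤ)^((dotp M (F x) + dotp N x).val) := rfl

lemma whtF_zero {N : Fin n → ZMod 2} (hN : N ≠ 0) : whtF F 0 N = 0 := by
  rw [whtF_eq]
  rw [Finset.sum_congr rfl (fun x _ => by rw [dotp_zero_left, zero_add])]
  exact sum_sign_linear N hN

lemma cw_ne_zero (hna : ∀ μ : Fin m → ZMod 2, μ ≠ 0 →
      ¬ ∃ (ν : Fin n → ZMod 2) (ε : ZMod 2), ∀ x, dotp μ (F x) = dotp ν x + ε)
    (h0 : F 0 = 0) {μ : Fin m → ZMod 2} (hμ : μ ≠ 0) (ν : Fin n → ZMod 2) :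
    cw F μ ν ≠ 0 := by
  intro hc
  apply hna μ hμ
  refine ⟨ν, 0, fun x => ?_⟩
  rw [add_zero]
  by_cases hx : x = 0
  · subst hx; rw [h0, dotp_zero_right, dotp_zero_right]
  · exact z2_add_eq_zero (congrFun hc ⟨x, hx⟩)

lemma cw_lin_ne_zero {ν : Fin n → ZMod 2} (hν : ν ≠ 0) : cw F 0 ν ≠ 0 := by
  obtain ⟨i, hi⟩ := Function.ne_iff.mp hν
  have hi1 : ν i = 1 := (z2 (ν i)).resolve_left hi
  intro hc
  have hx : (Pi.single i 1 : Fin n → ZMod 2) ≠ 0 := by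
    intro h
    have := congrFun h i
    rw [Pi.single_eq_same] at this
    exact one_ne_zero this
  have h2 : dotp (0 : Fin m → ZMod 2) (F (Pi.single i 1)) + dotp ν (Pi.single i 1) = 0 :=
    congrFun hc ⟨Pi.single i 1, hx⟩
  rw [dotp_zero_left, zero_add, dotp_single, hi1] at h2
  exact one_ne_zero h2

lemma cw_zero_zero : cw F 0 0 = 0 := by
  funext x
  show dotp 0 (F x.1) + dotp 0 x.1 = 0
  rw [dotp_zero_left, dotp_zero_left, add_zero]

lemma cw_inj (hna : ∀ μ : Fin m → ZMod 2, μ ≠ 0 →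
      ¬ ∃ (ν : Fin n → ZMod 2) (ε : ZMod 2), ∀ x, dotp μ (F x) = dotp ν x + ε)
    (h0 : F 0 = 0) {M M' : Fin m → ZMod 2} {N N' : Fin n → ZMod 2}
    (h : cw F M N = cw F M' N') : M = M' ∧ N = N' := by
  have hz : cw F (M + M') (N + N') = 0 := by
    funext x
    show dotp (M + M') (F x.1) + dotp (N + N') x.1 = 0
    rw [dotp_add_left, dotp_add_left]
    have hx := congrFun h x
    have : dotp M (F x.1) + dotp N x.1 = dotp M' (F x.1) + dotp N' x.1 := hx
    calc dotp M (F x.1) + dotp M' (F x.1) + (dotp N x.1 + dotp N' x.1)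
        = (dotp M (F x.1) + dotp N x.1) + (dotp M' (F x.1) + dotp N' x.1) := by ring
      _ = (dotp M' (F x.1) + dotp N' x.1) + (dotp M' (F x.1) + dotp N' x.1) := by rw [this]
      _ = 0 := z2_add_self _
  by_cases hM : M + M' = 0
  · have hMM := fadd_eq_zero hM
    refine ⟨hMM, ?_⟩
    rw [hM] at hz
    by_cases hN : N + N' = 0
    · exact fadd_eq_zero hN
    · exact absurd hz (cw_lin_ne_zero hN)
  · exact absurd hz (cw_ne_zero hna h0 hM _)

lemma subset_iff (h0 : F 0 = 0) (M M' : Fin m → ZMod 2) (N N' : Fin n → ZMod 2) :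
    ({x | cw F M' N' x = 1} ⊆ {x | cw F M N x = 1}) ↔
      whtF F M' N' + whtF F (M + M') (N + N') - whtF F M N = 2 ^ n := by
  have hgh : ∑ x : Fin n → ZMod 2,
      (-1:ℤ)^(((dotp M (F x) + dotp N x) + (dotp M' (F x) + dotp N' x)).val)
        = whtF F (M + M') (N + N') := by
    rw [whtF_eq]
    refine Finset.sum_congr rfl fun x _ => ?_
    congr 2
    rw [dotp_add_left, dotp_add_left]; ring
  rw [whtF_eq M N, whtF_eq M' N', ← hgh,
    ← key_count (fun x => dotp M (F x) + dotp N x) (fun x => dotp M' (F x) + dotp N' x)]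
  constructor
  · intro hs x hx
    by_cases hx0 : x = 0
    · exfalso
      subst hx0
      rw [h0, dotp_zero_right, dotp_zero_right, add_zero] at hx
      exact one_ne_zero hx.symm
    · exact hs (show cw F M' N' ⟨x, hx0⟩ = 1 from hx)
  · intro hs x hx
    exact hs x.1 hx
end CW

theorem stmt3 (n m : ℕ) (F : (Fin n → ZMod 2) → (Fin m → ZMod 2))
    (h0 : F 0 = 0)
    (hna : ∀ μ : Fin m → ZMod 2, μ ≠ 0 →
      ¬ ∃ (ν : Fin n → ZMod 2) (ε : ZMod 2), ∀ x, dotp μ (F x) = dotp ν x + ε) :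
    IsMinimal (codeF F) ↔
      ((∀ μ : Fin m → ZMod 2, μ ≠ 0 → ∀ ν ν' : Fin n → ZMod 2, ν ≠ ν' →
          whtF F μ ν + whtF F μ ν' ≠ 2 ^ n ∧ whtF F μ ν - whtF F μ ν' ≠ 2 ^ n) ∧
       (∀ μ μ' : Fin m → ZMod 2, μ ≠ 0 → μ' ≠ 0 → μ ≠ μ' →
          ∀ ν ν' : Fin n → ZMod 2,
            whtF F μ ν + whtF F μ' ν' - whtF F (μ + μ') (ν + ν') ≠ 2 ^ n)) := by
  have hmem : ∀ (M : Fin m → ZMod 2) (N : Fin n → ZMod 2), cw F M N ∈ codeF F :=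
    fun M N => ⟨(M, N), rfl⟩
  constructor
  · intro hmin
    constructor
    · intro μ hμ ν ν' hνν'
      have hNN : ν + ν' ≠ 0 := fun hh => hνν' (fadd_eq_zero hh)
      constructor
      · intro heq
        have hsub : {x | cw F μ ν' x = 1} ⊆ {x | cw F 0 (ν + ν') x = 1} := by
          rw [subset_iff h0]
          rw [zero_add, show (ν + ν') + ν' = ν from fadd_cancel2 ν ν', whtF_zero hNN]
          linarith
        have hc := hmin _ (hmem 0 (ν + ν')) _ (hmem μ ν')
          (cw_lin_ne_zero hNN) (cw_ne_zero hna h0 hμ ν') hsub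
        exact hμ (cw_inj hna h0 hc).1
      · intro heq
        have hsub : {x | cw F 0 (ν + ν') x = 1} ⊆ {x | cw F μ ν' x = 1} := by
          rw [subset_iff h0]
          rw [add_zero, show ν' + (ν + ν') = ν from fadd_cancel' ν' ν, whtF_zero hNN]
          linarith
        have hc := hmin _ (hmem μ ν') _ (hmem 0 (ν + ν'))
          (cw_ne_zero hna h0 hμ ν') (cw_lin_ne_zero hNN) hsub
        exact hμ ((cw_inj hna h0 hc).1).symm
    · intro μ μ' hμ hμ' hμμ' ν ν' heq
      have hMM : μ + μ' ≠ 0 := fun hh => hμμ' (fadd_eq_zero hh)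
      have hsub : {x | cw F μ' ν' x = 1} ⊆ {x | cw F (μ + μ') (ν + ν') x = 1} := by
        rw [subset_iff h0]
        rw [show (μ + μ') + μ' = μ from fadd_cancel2 μ μ',
          show (ν + ν') + ν' = ν from fadd_cancel2 ν ν']
        linarith
      have hc := hmin _ (hmem (μ + μ') (ν + ν')) _ (hmem μ' ν')
        (cw_ne_zero hna h0 hMM _) (cw_ne_zero hna h0 hμ' ν') hsub
      have h3 := (cw_inj hna h0 hc).1
      -- h3 : μ' = μ + μ'
      apply hμ
      have : μ' + μ' = (μ + μ') + μ' := by rw [← h3]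
      rw [fadd_self, fadd_cancel2] at this
      exact this.symm
  · rintro ⟨h1, h2⟩ c ⟨⟨M, N⟩, rfl⟩ c' ⟨⟨M', N'⟩, rfl⟩ hc hc' hsub
    simp only at hsub hc hc' ⊢
    rw [subset_iff h0] at hsub
    by_cases hM : M = 0
    · subst hM
      have hN : N ≠ 0 := by rintro rfl; exact hc cw_zero_zero
      by_cases hM' : M' = 0
      · subst hM'
        have hN' : N' ≠ 0 := by rintro rfl; exact hc' cw_zero_zero
        rw [whtF_zero hN, whtF_zero hN', zero_add, sub_zero] at hsub
        by_cases hNN : N + N' = 0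
        · rw [fadd_eq_zero hNN]
        · exfalso
          rw [show ((0:Fin m → ZMod 2) + 0) = 0 from add_zero 0, whtF_zero hNN] at hsub
          have := pow_pos (by norm_num : (0:ℤ) < 2) n
          omega
      · exfalso
        have hne : N' ≠ N + N' := by
          intro hh
          apply hN
          have : N' + N' = (N + N') + N' := by rw [← hh]
          rw [fadd_self, fadd_cancel2] at this
          exact this.symm
        rw [whtF_zero hN, sub_zero, zero_add] at hsub
        exact (h1 M' hM' N' (N + N') hne).1 hsub
    · by_cases hM' : M' = 0
      · subst hM'
        exfalso
        have hN' : N' ≠ 0 := by rintro rfl; exact hc' cw_zero_zero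
        have hne : N + N' ≠ N := by
          intro hh
          apply hN'
          have h4 : N + (N + N') = N + N := by rw [hh]
          rw [← add_assoc, fadd_self, zero_add] at h4
          exact h4
        rw [whtF_zero hN', zero_add, add_zero] at hsub
        exact (h1 M hM (N + N') N hne).2 hsub
      · by_cases hMM : M = M'
        · subst hMM
          by_cases hNN : N = N'
          · subst hNN; rfl
          · exfalso
            rw [fadd_self] at hsub
            have hNN2 : N + N' ≠ 0 := fun hh => hNN (fadd_eq_zero hh)
            rw [whtF_zero hNN2, add_zero] at hsub
            exact (h1 M hM N' N (fun hh => hNN hh.symm)).2 hsub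
        · exfalso
          have hMM2 : M + M' ≠ 0 := fun hh => hMM (fadd_eq_zero hh)
          have hne : M' ≠ M + M' := by
            intro hh
            apply hM
            have : M' + M' = (M + M') + M' := by rw [← hh]
            rw [fadd_self, fadd_cancel2] at this
            exact this.symm
          have := h2 M' (M + M') hM' hMM2 hne N' (N + N')
          rw [show M' + (M + M') = M from fadd_cancel' M' M,
            show N' + (N + N') = N from fadd_cancel' N' N] at this
          exact this (by linarith)
end

section
/- Let n > 4 and let F be an (n,m)-function with F(0) = 0 such that max over μ ∈ 𝔽₂^m∖{0} and ν ∈ 𝔽₂ⁿ of |W_F(μ,ν)| equals 2^{(n+λ)/2}, where λ is an integer with 0 ≤ λ ≤ n−4 and λ ≡ n (mod 2). Then the binary linear code C_F is minimal, has length 2ⁿ−1 and dimension n+m over 𝔽₂, and every nonzero codeword of C_F has Hamming weight at least 2^{n−1} − 2^{(n+λ)/2−1}. -/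
/-!
Since `F 0 = 0`, the Walsh value `W_F(μ, ν)` equals `2ⁿ - 2 wt(c(μ, ν))`, and it vanishes for
`μ = 0, ν ≠ 0`. Hence the spectral bound keeps every nonzero weight within `2^(k-1)` of `2^(n-1)`,
where `k = (n + λ) / 2 ≤ n - 2`, so the largest weight is less than twice the smallest. This forces
minimality (Ashikhmin–Barg): if `supp c' ⊆ supp c` and `c' ≠ c`, then `wt c = wt c' + wt (c + c')`
is at least twice the smallest weight. As `2^k < 2ⁿ`, no `c(μ, ν)` with `μ ≠ 0` vanishes, so
`(μ, ν) ↦ c(μ, ν)` is injective and the code has dimension `n + m`.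
-/
open Finset Matrix

lemma neg_one_pow_val_add_one (a : ZMod 2) : (-1 : ℤ) ^ (a + 1).val = -(-1) ^ a.val := by
  revert a; decide

lemma neg_one_pow_val_eq (a : ZMod 2) : (-1 : ℤ) ^ a.val = 1 - 2 * if a = 1 then 1 else 0 := by
  revert a; decide

lemma sum_neg_one_pow_val {ι : Type*} [Fintype ι] (c : ι → ZMod 2) :
    ∑ x, (-1 : ℤ) ^ (c x).val = Fintype.card ι - 2 * #{x | c x = 1} := by
  simp only [neg_one_pow_val_eq, sum_sub_distrib, ← mul_sum, sum_boole, sum_const, card_univ]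
  simp

lemma sum_neg_one_pow_dotProduct_eq_zero {n : ℕ} {ν : Fin n → ZMod 2} (hν : ν ≠ 0) :
    ∑ x : Fin n → ZMod 2, (-1 : ℤ) ^ (ν ⬝ᵥ x).val = 0 := by
  obtain ⟨i, hi⟩ := Function.ne_iff.mp hν
  have hνi : ν i = 1 := by
    rw [Pi.zero_apply] at hi; generalize ν i = a at hi ⊢; revert a; decide
  -- translating by the `i`-th unit vector flips every sign
  have hflip := Equiv.sum_comp (Equiv.addRight (Pi.single i 1 : Fin n → ZMod 2))
    fun x => (-1 : ℤ) ^ (ν ⬝ᵥ x).val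
  simp only [Equiv.coe_addRight, dotProduct_add, dotProduct_single, hνi, mul_one,
    neg_one_pow_val_add_one, sum_neg_distrib] at hflip
  linarith

lemma card_ne_zero_vectors (n : ℕ) :
    Fintype.card {x : Fin n → ZMod 2 // x ≠ 0} = 2 ^ n - 1 := by
  rw [Fintype.card_subtype_compl, Fintype.card_subtype_eq]
  simp

section Weights

variable {n : ℕ}

lemma wt_zero : wt (0 : {x : Fin n → ZMod 2 // x ≠ 0} → ZMod 2) = 0 := by
  simp [wt]

lemma wt_eq_wt_add_wt_add {c c' : {x : Fin n → ZMod 2 // x ≠ 0} → ZMod 2}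
    (hsub : {x | c' x = 1} ⊆ {x | c x = 1}) : wt c = wt c' + wt (c + c') := by
  have hsub' : univ.filter (c' · = 1) ⊆ univ.filter (c · = 1) :=
    monotone_filter_right _ fun x _ hx => hsub hx
  have hsupp : univ.filter ((c + c') · = 1) = univ.filter (c · = 1) \ univ.filter (c' · = 1) := by
    ext x
    have hx : c' x = 1 → c x = 1 := @hsub x
    simp only [mem_filter, mem_sdiff, mem_univ, true_and, Pi.add_apply]
    generalize c x = a, c' x = b at hx ⊢
    revert a b; decide
  rw [wt, wt, wt, hsupp, ← card_sdiff_add_card_eq_card hsub', add_comm]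

lemma isMinimal_of_wt_bounds {C : Set ({x : Fin n → ZMod 2 // x ≠ 0} → ZMod 2)}
    (hadd : ∀ c ∈ C, ∀ c' ∈ C, c + c' ∈ C) {a b : ℕ} (hab : b < 2 * a)
    (hwt : ∀ c ∈ C, c ≠ 0 → a ≤ wt c ∧ wt c ≤ b) : IsMinimal C := by
  intro c hc c' hc' hc0 hc'0 hsub
  by_contra hne
  have hsum0 : c + c' ≠ 0 := fun h => hne <| by
    rw [add_eq_zero_iff_eq_neg, ZModModule.neg_eq_self] at h; exact h.symm
  have hsplit := wt_eq_wt_add_wt_add hsub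
  have hwt_c := hwt c hc hc0
  have hwt_c' := hwt c' hc' hc'0
  have hwt_sum := hwt _ (hadd c hc c' hc') hsum0
  omega

end Weights

section WalshCode

variable {n m : ℕ} (F : (Fin n → ZMod 2) → (Fin m → ZMod 2))

lemma dotp_eq_dotProduct (v x : Fin n → ZMod 2) : dotp v x = v ⬝ᵥ x := rfl

lemma whtF_zero_left {ν : Fin n → ZMod 2} (hν : ν ≠ 0) : whtF F 0 ν = 0 := by
  simpa [whtF, wht, dotp_eq_dotProduct] using sum_neg_one_pow_dotProduct_eq_zero hν

lemma whtF_eq_two_pow_sub_two_mul_wt (h0 : F 0 = 0) (μ : Fin m → ZMod 2) (ν : Fin n → ZMod 2) :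
    whtF F μ ν = 2 ^ n - 2 * wt (cw F μ ν) := by
  have hcw := sum_neg_one_pow_val (cw F μ ν)
  rw [card_ne_zero_vectors, Nat.cast_sub Nat.one_le_two_pow] at hcw
  rw [whtF, wht, Fintype.sum_eq_add_sum_subtype_ne _ 0]
  simp only [wt, cw] at hcw ⊢
  rw [hcw, h0]
  simp only [dotp_eq_dotProduct, dotProduct_zero, add_zero, ZMod.val_zero, pow_zero,
    Nat.cast_pow, Nat.cast_ofNat, Nat.cast_one]
  ring

def cwHom : (Fin m → ZMod 2) × (Fin n → ZMod 2) →+ ({x : Fin n → ZMod 2 // x ≠ 0} → ZMod 2) where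
  toFun p := cw F p.1 p.2
  map_zero' := by
    funext x
    simp [cw, dotp_eq_dotProduct]
  map_add' p q := by
    funext x
    simp only [cw, dotp_eq_dotProduct, Prod.fst_add, Prod.snd_add, add_dotProduct, Pi.add_apply]
    ring

lemma codeF_eq_range_cwHom : codeF F = Set.range (cwHom F) := rfl

lemma cw_zero_left_eq_zero_iff {ν : Fin n → ZMod 2} : cw F 0 ν = 0 ↔ ν = 0 := by
  refine ⟨fun h => dotProduct_eq_zero ν fun x => ?_, fun h => ?_⟩
  · by_cases hx : x = 0
    · rw [hx, dotProduct_zero]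
    · simpa [cw, dotp_eq_dotProduct] using congrFun h ⟨x, hx⟩
  · subst h
    funext x
    simp [cw, dotp_eq_dotProduct]

lemma abs_whtF_le_of_cw_ne_zero {B : ℤ} (hB : 0 ≤ B)
    (hbd : ∀ μ : Fin m → ZMod 2, μ ≠ 0 → ∀ ν : Fin n → ZMod 2, |whtF F μ ν| ≤ B)
    {μ : Fin m → ZMod 2} {ν : Fin n → ZMod 2} (hc : cw F μ ν ≠ 0) : |whtF F μ ν| ≤ B := by
  by_cases hμ : μ = 0
  · subst hμ
    rw [whtF_zero_left F (mt (cw_zero_left_eq_zero_iff F).2 hc), abs_zero]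
    exact hB
  · exact hbd μ hμ ν

lemma cwHom_injective (h0 : F 0 = 0) {B : ℤ} (hB : B < 2 ^ n)
    (hbd : ∀ μ : Fin m → ZMod 2, μ ≠ 0 → ∀ ν : Fin n → ZMod 2, |whtF F μ ν| ≤ B) :
    Function.Injective (cwHom F) := by
  refine (injective_iff_map_eq_zero _).2 fun ⟨μ, ν⟩ hc => ?_
  change cw F μ ν = 0 at hc
  obtain rfl : μ = 0 := by
    by_contra hμ
    have h := hbd μ hμ ν
    rw [whtF_eq_two_pow_sub_two_mul_wt F h0, hc, wt_zero] at h
    simp only [CharP.cast_eq_zero, mul_zero, sub_zero, abs_pow, Nat.abs_ofNat] at h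
    linarith
  rw [(cw_zero_left_eq_zero_iff F).1 hc]
  rfl

lemma wt_cw_bounds (h0 : F 0 = 0) {k : ℕ} (hn : 1 ≤ n) (hk : 1 ≤ k)
    {μ : Fin m → ZMod 2} {ν : Fin n → ZMod 2} (h : |whtF F μ ν| ≤ 2 ^ k) :
    2 ^ (n - 1) - 2 ^ (k - 1) ≤ wt (cw F μ ν) ∧ wt (cw F μ ν) ≤ 2 ^ (n - 1) + 2 ^ (k - 1) := by
  rw [whtF_eq_two_pow_sub_two_mul_wt F h0, abs_le] at h
  have hn' : (2 : ℤ) ^ n = 2 * 2 ^ (n - 1) := by rw [← pow_succ']; congr 1; omega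
  have hk' : (2 : ℤ) ^ k = 2 * 2 ^ (k - 1) := by rw [← pow_succ']; congr 1; omega
  rw [hn', hk'] at h
  have hlo : (2 : ℤ) ^ (n - 1) ≤ wt (cw F μ ν) + 2 ^ (k - 1) := by linarith
  have hhi : (wt (cw F μ ν) : ℤ) ≤ 2 ^ (n - 1) + 2 ^ (k - 1) := by linarith
  exact ⟨Nat.sub_le_of_le_add (by exact_mod_cast hlo), by exact_mod_cast hhi⟩

end WalshCode

theorem stmt4_general (n m : ℕ) (hn : 4 < n) (lam : ℕ) (hlam : lam ≤ n - 4)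
    (F : (Fin n → ZMod 2) → (Fin m → ZMod 2)) (h0 : F 0 = 0)
    (hbd : ∀ μ : Fin m → ZMod 2, μ ≠ 0 → ∀ ν : Fin n → ZMod 2,
      |whtF F μ ν| ≤ 2 ^ ((n + lam) / 2)) :
    IsMinimal (codeF F) ∧
    Nat.card {x : Fin n → ZMod 2 // x ≠ 0} = 2 ^ n - 1 ∧
    Nat.card (codeF F) = 2 ^ (n + m) ∧
    (∀ c ∈ codeF F, c ≠ 0 → 2 ^ (n - 1) - 2 ^ ((n + lam) / 2 - 1) ≤ wt c) := by
  set k := (n + lam) / 2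
  have hwt : ∀ c ∈ codeF F, c ≠ 0 →
      2 ^ (n - 1) - 2 ^ (k - 1) ≤ wt c ∧ wt c ≤ 2 ^ (n - 1) + 2 ^ (k - 1) := by
    rintro _ ⟨⟨μ, ν⟩, rfl⟩ hc
    exact wt_cw_bounds F h0 (by omega) (by omega)
      (abs_whtF_le_of_cw_ne_zero F (by positivity) hbd hc)
  have hgap : 2 ^ (n - 1) + 2 ^ (k - 1) < 2 * (2 ^ (n - 1) - 2 ^ (k - 1)) := by
    have h4 : 2 ^ (k - 1 + 2) ≤ 2 ^ (n - 1) := Nat.pow_le_pow_right (by norm_num) (by omega)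
    rw [pow_add] at h4
    have := Nat.one_le_two_pow (n := k - 1)
    omega
  have hinj : Function.Injective (cwHom F) :=
    cwHom_injective F h0 (pow_lt_pow_right₀ (by norm_num) (by omega)) hbd
  refine ⟨isMinimal_of_wt_bounds ?_ hgap hwt, ?_, ?_, fun c hc hc0 => (hwt c hc hc0).1⟩
  · rintro _ ⟨p, rfl⟩ _ ⟨q, rfl⟩
    exact ⟨p + q, map_add (cwHom F) p q⟩
  · rw [Nat.card_eq_fintype_card, card_ne_zero_vectors]
  · rw [codeF_eq_range_cwHom, Nat.card_range_of_injective hinj]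
    simp [pow_add, mul_comm]

theorem stmt4 (n m : ℕ) (hn : 4 < n) (lam : ℕ) (hlam : lam ≤ n - 4)
    (hpar : lam % 2 = n % 2)
    (F : (Fin n → ZMod 2) → (Fin m → ZMod 2)) (h0 : F 0 = 0)
    (hbd : ∀ μ : Fin m → ZMod 2, μ ≠ 0 → ∀ ν : Fin n → ZMod 2,
      |whtF F μ ν| ≤ 2 ^ ((n + lam) / 2))
    (hmax : ∃ (μ : Fin m → ZMod 2) (ν : Fin n → ZMod 2), μ ≠ 0 ∧
      |whtF F μ ν| = 2 ^ ((n + lam) / 2)) :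
    IsMinimal (codeF F) ∧
    Nat.card {x : Fin n → ZMod 2 // x ≠ 0} = 2 ^ n - 1 ∧
    Nat.card (codeF F) = 2 ^ (n + m) ∧
    (∀ c ∈ codeF F, c ≠ 0 → 2 ^ (n - 1) - 2 ^ ((n + lam) / 2 - 1) ≤ wt c) :=
  stmt4_general n m hn lam hlam F h0 hbd
end
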